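/- In the quotient complex A_2^+ = C / N_2 with induced differential δ̄, the image of z_6 is nonzero, satisfies δ̄(z_6) = 0, and does not lie in the image of δ̄; that is, the homology class of z_6 in H(A_2^+) is nonzero. (Together with the nonvanishing of [U z_6] in H(A_1^+) and the fact that U z_6 is a boundary in A_2^+, this establishes nu^+(T_{2,9} # -T_{2,3;2,5}) = 2.) -/

import Mathlib

/-!
The class of `z 6` is detected by a cocycle of the dual complex: the functional taking the
constant coefficient of the sum of the `z 2`, `z 4`, `z 6`, `z 8`, `z 10` coordinates. Each
`δ (z i)` contains an even number of these generators, so the functional kills every boundary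
(coefficients are in characteristic two); and each of them has `0 ≤ max (fa i) (fb i - 2)`,
so their `U`-degree-zero multiples are not in `N 2` and the functional descends to `A_2^+`.
Since it takes the value `1` on `z 6`, the class of `z 6` is nonzero.
-/

noncomputable section

abbrev F : Type := ZMod 2

abbrev R : Type := LaurentPolynomial (ZMod 2)

def U : R := LaurentPolynomial.T 1

abbrev C : Type := Fin 13 → R

/-- The standard basis of `C`, modeling the generators `z_0, ..., z_12`. -/
def z (i : Fin 13) : C := Pi.single i 1

/-- The first (Alexander `i`) filtration levels of `z_0, ..., z_12`. -/
def fa : Fin 13 → ℤ := ![0, -1, -1, 0, 0, 1, 1, 2, 2, 3, 3, 0, 0]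

/-- The second (Alexander `j`) filtration levels of `z_0, ..., z_12`. -/
def fb : Fin 13 → ℤ := ![0, 0, 3, 3, 2, 2, 1, 1, 0, 0, -1, -1, 0]

/-- `N k` is the `F`-linear span of the `U^n • z i` with
`n ≥ max (fa i) (fb i - k) + 1`, i.e. the part of `C` lying in
`max(i-filtration, j-filtration - k) < 0`. -/
def N (k : ℤ) : Submodule F C :=
  Submodule.span F
    {v : C | ∃ (i : Fin 13) (n : ℤ),
      max (fa i) (fb i - k) + 1 ≤ n ∧ v = (LaurentPolynomial.T n : R) • z i}

open LaurentPolynomial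

namespace LaurentPolynomial

variable {K : Type*} [Semiring K]

def lcoeff (n : ℤ) : K[T;T⁻¹] →ₗ[K] K :=
  Finsupp.lapply n ∘ₗ (AddMonoidAlgebra.coeffLinearEquiv K).toLinearMap

@[simp] lemma lcoeff_apply (n : ℤ) (p : K[T;T⁻¹]) : lcoeff n p = p.coeff n := rfl

end LaurentPolynomial

namespace Submodule

variable {K M P : Type*} [Ring K] [AddCommGroup M] [Module K M] [AddCommGroup P] [Module K P]
  {N : Submodule K M} {φ : M →ₗ[K] P} {x : M}

lemma mkQ_ne_zero_of_le_ker (hN : N ≤ LinearMap.ker φ) (hx : φ x ≠ 0) : N.mkQ x ≠ 0 :=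
  fun h => hx (by simpa using congrArg (N.liftQ φ hN) h)

lemma mapQ_ne_mkQ_of_le_ker (hN : N ≤ LinearMap.ker φ) {d : M →ₗ[K] M} (hd : N ≤ N.comap d)
    (hφd : φ ∘ₗ d = 0) (hx : φ x ≠ 0) (c : M ⧸ N) : N.mapQ N d hd c ≠ N.mkQ x := by
  obtain ⟨v, rfl⟩ := N.mkQ_surjective c
  intro h
  apply hx
  simpa [← LinearMap.comp_apply φ d, hφd] using (congrArg (N.liftQ φ hN) h).symm

end Submodule

section coordSum

variable {ι A : Type*} [DecidableEq ι] [CommSemiring A]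

def coordSum (S : Finset ι) : (ι → A) →ₗ[A] A := ∑ i ∈ S, LinearMap.proj i

lemma coordSum_single (S : Finset ι) (j : ι) (a : A) :
    coordSum S (Pi.single j a) = if j ∈ S then a else 0 := by
  simp [coordSum, Finset.sum_pi_single']

end coordSum

instance : CharP R 2 := charP_of_injective_algebraMap (algebraMap F R).injective 2

lemma coordSum_z (S : Finset (Fin 13)) (j : Fin 13) : coordSum S (z j) = if j ∈ S then 1 else 0 :=
  coordSum_single S j 1

def constCoeffSum (S : Finset (Fin 13)) : C →ₗ[F] F :=
  lcoeff 0 ∘ₗ (coordSum S).restrictScalars F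

lemma N_le_ker_constCoeffSum {k : ℤ} {S : Finset (Fin 13)}
    (hS : ∀ i ∈ S, 0 ≤ max (fa i) (fb i - k)) : N k ≤ LinearMap.ker (constCoeffSum S) := by
  refine Submodule.span_le.mpr ?_
  rintro v ⟨i, n, hn, rfl⟩
  by_cases hi : i ∈ S
  · have hn0 : n ≠ 0 := by have := hS i hi; omega
    simp [constCoeffSum, coordSum_z, hi, T_apply, hn0]
  · simp [constCoeffSum, coordSum_z, hi]

def evenGens : Finset (Fin 13) := {2, 4, 6, 8, 10}

lemma coordSum_evenGens_comp_eq_zero (δ : C →ₗ[R] C)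
    (h0 : δ (z 0) = z 1) (h1 : δ (z 1) = 0)
    (h2 : δ (z 2) = z 1) (h3 : δ (z 3) = z 2 + z 4)
    (h4 : δ (z 4) = z 1) (h5 : δ (z 5) = z 0 + z 4 + z 6)
    (h6 : δ (z 6) = 0) (h7 : δ (z 7) = z 6 + z 8 + z 12)
    (h8 : δ (z 8) = z 11) (h9 : δ (z 9) = z 8 + z 10)
    (h10 : δ (z 10) = z 11) (h11 : δ (z 11) = 0)
    (h12 : δ (z 12) = z 11) :
    coordSum evenGens ∘ₗ δ = 0 := by
  refine (Pi.basisFun R (Fin 13)).ext fun i => ?_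
  rw [Pi.basisFun_apply, ← z]
  fin_cases i <;>
    simp [h0, h1, h2, h3, h4, h5, h6, h7, h8, h9, h10, h11, h12, coordSum_z, evenGens,
      CharTwo.add_self_eq_zero]

theorem z6_nonzero_in_homology_of_A2plus
    (δ : C →ₗ[R] C)
    (h0 : δ (z 0) = z 1) (h1 : δ (z 1) = 0)
    (h2 : δ (z 2) = z 1) (h3 : δ (z 3) = z 2 + z 4)
    (h4 : δ (z 4) = z 1) (h5 : δ (z 5) = z 0 + z 4 + z 6)
    (h6 : δ (z 6) = 0) (h7 : δ (z 7) = z 6 + z 8 + z 12)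
    (h8 : δ (z 8) = z 11) (h9 : δ (z 9) = z 8 + z 10)
    (h10 : δ (z 10) = z 11) (h11 : δ (z 11) = 0)
    (h12 : δ (z 12) = z 11)
    (hstab : N 2 ≤ (N 2).comap (LinearMap.restrictScalars F δ)) :
    letI π : C →ₗ[F] C ⧸ N 2 := (N 2).mkQ
    letI δbar : (C ⧸ N 2) →ₗ[F] C ⧸ N 2 :=
      Submodule.mapQ (N 2) (N 2) (LinearMap.restrictScalars F δ) hstab
    π (z 6) ≠ 0 ∧
    δbar (π (z 6)) = 0 ∧
    ∀ c : C ⧸ N 2, δbar c ≠ π (z 6) := by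
  have hN : N 2 ≤ LinearMap.ker (constCoeffSum evenGens) := N_le_ker_constCoeffSum (by decide)
  have hz6 : constCoeffSum evenGens (z 6) ≠ 0 := by simp [constCoeffSum, coordSum_z, evenGens]
  have hboundary : constCoeffSum evenGens ∘ₗ δ.restrictScalars F = 0 := by
    rw [constCoeffSum, LinearMap.comp_assoc, ← LinearMap.restrictScalars_comp,
      coordSum_evenGens_comp_eq_zero δ h0 h1 h2 h3 h4 h5 h6 h7 h8 h9 h10 h11 h12]
    simp
  refine ⟨Submodule.mkQ_ne_zero_of_le_ker hN hz6, ?_,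
    Submodule.mapQ_ne_mkQ_of_le_ker hN hstab hboundary hz6⟩
  simp [h6]

end
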